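/- arXiv:1311.3003 — 3 statements merged into one kernel-verified Lean document; each statement's English description precedes it below -/
import Mathlib

section
/- Let 0 < μ₁ ≤ ν₁ and μ₂ ≤ ν₂ with μ₁ < μ₂ and ν₁ < ν₂. Assume ĉ(ν₁,ν₂) + b̂(ν₁) > 0 and b̂(ν₁)/(ĉ(ν₁,ν₂) + b̂(ν₁)) < 1/2. Then (ĉ(ν₁,ν₂) + b̂(ν₁))·(1 − h(b̂(ν₁)/(ĉ(ν₁,ν₂) + b̂(ν₁)))) ≤ (ĉ(μ₁,μ₂) + b̂(μ₁))·(1 − h(b̂(μ₁)/(ĉ(μ₁,μ₂) + b̂(μ₁)))). That is, the quantity (ĉ(μ₁,μ₂)+b̂(μ₁))(1−h(b̂(μ₁)/(ĉ(μ₁,μ₂)+b̂(μ₁)))) is monotonically decreasing in both μ₁ and μ₂ on the region where the phase-error ratio is below 1/2. -/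
/-- Binary entropy function (base-2). Note `Real.logb 2 0 = 0`, so `binEnt 0 = binEnt 1 = 0`. -/
noncomputable def binEnt (x : ℝ) : ℝ :=
  -x * Real.logb 2 x - (1 - x) * Real.logb 2 (1 - x)

/-- Estimate `b̂(μ)` of the phase-error detection rate of the single photon pulse. -/
noncomputable def bHat (α s p₀ μ : ℝ) : ℝ :=
  (s * (1 - Real.exp (-α * μ)) * Real.exp μ + (p₀ / 2) * (Real.exp μ - 1)) / μ

/-- Estimate `ĉ(μ₁,μ₂)` of the rate that the single photon pulse is detected
without phase error. -/
noncomputable def cHat (α s p₀ μ₁ μ₂ : ℝ) : ℝ :=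
  (μ₂ ^ 2 * Real.exp μ₁ * ((1 - s) * (1 - Real.exp (-α * μ₁)) + (p₀ / 2) * (1 - Real.exp (-μ₁)))
    - μ₁ ^ 2 * Real.exp μ₂ * ((1 - s) * (1 - Real.exp (-α * μ₂)) + (p₀ / 2) * (1 - Real.exp (-μ₂))))
  / (μ₁ * μ₂ * (μ₂ - μ₁))

/-!
Write `Dₜ(μ) = (t (eᵘ - e^{(1-α)μ}) + (p₀/2)(eᵘ - 1)) / μ`. Then `b̂ = D_s`, and `ĉ(μ₁, μ₂)` is the
value at `0` of the chord of `D_{1-s}` through `μ₁` and `μ₂`. Each `Dₜ` is a power series with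
nonnegative coefficients, hence increasing and convex on `μ > 0`; so `b̂` increases and, since
chord slopes of a convex function increase, `ĉ` decreases in both arguments. Finally,
`log 2 · (c + e)(1 - h(e / (c + e))) = (c + e) log 2 + e log e + c log c - (c + e) log (c + e)`,
which increases in `c` and decreases in `e` as long as `e ≤ c`.
-/

open Real Set
open scoped Nat

section PowerSeries

variable {a : ℕ → ℝ}

lemma monotoneOn_tsum_mul_pow (ha : ∀ n, 0 ≤ a n)
    (hsum : ∀ x, 0 ≤ x → Summable fun n ↦ a n * x ^ n) :
    MonotoneOn (fun x ↦ ∑' n, a n * x ^ n) (Ici 0) := fun x hx y hy hxy ↦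
  (hsum x hx).tsum_le_tsum
    (fun n ↦ mul_le_mul_of_nonneg_left (pow_le_pow_left₀ hx hxy n) (ha n)) (hsum y hy)

lemma convexOn_tsum_mul_pow (ha : ∀ n, 0 ≤ a n)
    (hsum : ∀ x, 0 ≤ x → Summable fun n ↦ a n * x ^ n) :
    ConvexOn ℝ (Ici 0) (fun x ↦ ∑' n, a n * x ^ n) := by
  refine ⟨convex_Ici 0, fun x hx y hy u v hu hv huv ↦ ?_⟩
  have hx' : 0 ≤ x := hx
  have hy' : 0 ≤ y := hy
  have hsx := (hsum x hx).mul_left u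
  have hsy := (hsum y hy).mul_left v
  simp only [smul_eq_mul, ← tsum_mul_left, ← hsx.tsum_add hsy]
  refine (hsum _ (by positivity)).tsum_le_tsum (fun n ↦ ?_) (hsx.add hsy)
  have hpow : (u * x + v * y) ^ n ≤ u * x ^ n + v * y ^ n := by
    simpa only [smul_eq_mul] using (convexOn_pow n).2 hx hy hu hv huv
  calc a n * (u * x + v * y) ^ n ≤ a n * (u * x ^ n + v * y ^ n) :=
        mul_le_mul_of_nonneg_left hpow (ha n)
    _ = u * (a n * x ^ n) + v * (a n * y ^ n) := by ring

end PowerSeries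

noncomputable def expSlope (β μ : ℝ) : ℝ :=
  ∑' n : ℕ, (1 - β ^ (n + 1)) / (n + 1)! * μ ^ n

lemma expSlope_eq (β : ℝ) {μ : ℝ} (hμ : μ ≠ 0) :
    expSlope β μ = (exp μ - exp (β * μ)) / μ := by
  have h := (NormedSpace.expSeries_div_hasSum_exp μ).sub
    (NormedSpace.expSeries_div_hasSum_exp (β * μ))
  rw [← exp_eq_exp_ℝ] at h
  have hshift := ((hasSum_nat_add_iff' 1).mpr h).div_const μ
  simp only [Finset.range_one, Finset.sum_singleton, pow_zero, sub_self, sub_zero] at hshift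
  refine (hshift.congr_fun fun n ↦ ?_).tsum_eq
  field_simp
  ring

section ExpSlope

variable {β : ℝ} (hβ0 : 0 ≤ β) (hβ1 : β ≤ 1)
include hβ0 hβ1

lemma one_sub_pow_div_factorial_nonneg (n : ℕ) : 0 ≤ (1 - β ^ (n + 1)) / (n + 1)! :=
  div_nonneg (sub_nonneg.mpr (pow_le_one₀ hβ0 hβ1)) (Nat.cast_nonneg _)

lemma summable_expSlope {x : ℝ} (hx : 0 ≤ x) :
    Summable fun n : ℕ ↦ (1 - β ^ (n + 1)) / (n + 1)! * x ^ n := by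
  refine (Real.summable_pow_div_factorial x).of_nonneg_of_le
    (fun n ↦ mul_nonneg (one_sub_pow_div_factorial_nonneg hβ0 hβ1 n) (pow_nonneg hx n))
    (fun n ↦ ?_)
  have hcoeff : (1 - β ^ (n + 1)) / (n + 1)! ≤ 1 / n ! := by
    gcongr
    · exact sub_le_self _ (pow_nonneg hβ0 _)
    · exact n.le_succ
  calc (1 - β ^ (n + 1)) / (n + 1)! * x ^ n ≤ 1 / n ! * x ^ n :=
        mul_le_mul_of_nonneg_right hcoeff (pow_nonneg hx n)
    _ = x ^ n / n ! := by ring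

lemma monotoneOn_expSlope : MonotoneOn (expSlope β) (Ici 0) :=
  monotoneOn_tsum_mul_pow (one_sub_pow_div_factorial_nonneg hβ0 hβ1)
    fun _ ↦ summable_expSlope hβ0 hβ1

lemma convexOn_expSlope : ConvexOn ℝ (Ici 0) (expSlope β) :=
  convexOn_tsum_mul_pow (one_sub_pow_div_factorial_nonneg hβ0 hβ1)
    fun _ ↦ summable_expSlope hβ0 hβ1

end ExpSlope

/-- The value at `0` of the line through `(a, G a)` and `(b, G b)`. -/
noncomputable def chordIntercept (G : ℝ → ℝ) (a b : ℝ) : ℝ :=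
  (b * G a - a * G b) / (b - a)

section ChordIntercept

variable {G : ℝ → ℝ}

lemma chordIntercept_eq_sub_left_mul_slope {a b : ℝ} (hab : a ≠ b) :
    chordIntercept G a b = G a - a * ((G b - G a) / (b - a)) := by
  have : b - a ≠ 0 := sub_ne_zero.mpr hab.symm
  rw [chordIntercept]
  field_simp
  ring

lemma chordIntercept_eq_sub_right_mul_slope {a b : ℝ} (hab : a ≠ b) :
    chordIntercept G a b = G b - b * ((G a - G b) / (a - b)) := by
  have : b - a ≠ 0 := sub_ne_zero.mpr hab.symm
  have : a - b ≠ 0 := sub_ne_zero.mpr hab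
  rw [chordIntercept]
  field_simp
  ring

lemma ConvexOn.chordIntercept_anti_right (hG : ConvexOn ℝ (Ioi 0) G) {a b b' : ℝ}
    (ha : 0 < a) (hab : a < b) (hbb : b ≤ b') :
    chordIntercept G a b' ≤ chordIntercept G a b := by
  rw [chordIntercept_eq_sub_left_mul_slope hab.ne,
    chordIntercept_eq_sub_left_mul_slope (hab.trans_le hbb).ne]
  have hslope := hG.secant_mono ha (ha.trans hab) (ha.trans (hab.trans_le hbb)) hab.ne'
    (hab.trans_le hbb).ne' hbb
  nlinarith

lemma ConvexOn.chordIntercept_anti_left (hG : ConvexOn ℝ (Ioi 0) G) {a a' b : ℝ}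
    (ha : 0 < a) (haa : a ≤ a') (hab : a' < b) :
    chordIntercept G a' b ≤ chordIntercept G a b := by
  rw [chordIntercept_eq_sub_right_mul_slope hab.ne,
    chordIntercept_eq_sub_right_mul_slope (haa.trans_lt hab).ne]
  have hb : 0 < b := ha.trans (haa.trans_lt hab)
  have hslope := hG.secant_mono hb ha (ha.trans_le haa) (haa.trans_lt hab).ne hab.ne haa
  nlinarith

end ChordIntercept

noncomputable def detRate (α t p₀ μ : ℝ) : ℝ :=
  exp μ * (t * (1 - exp (-α * μ)) + p₀ / 2 * (1 - exp (-μ))) / μ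

lemma detRate_eq {α t p₀ μ : ℝ} (hμ : μ ≠ 0) :
    detRate α t p₀ μ = t * expSlope (1 - α) μ + p₀ / 2 * expSlope 0 μ := by
  rw [detRate, expSlope_eq _ hμ, expSlope_eq _ hμ, zero_mul, exp_zero,
    show (1 - α) * μ = μ + -α * μ by ring, exp_add, exp_neg]
  field_simp

lemma bHat_eq_detRate (α s p₀ : ℝ) : bHat α s p₀ = detRate α s p₀ := by
  funext μ
  rw [bHat, detRate, exp_neg μ]
  field_simp

lemma cHat_eq_chordIntercept {α s p₀ μ₁ μ₂ : ℝ} (hμ₁ : μ₁ ≠ 0) (hμ₂ : μ₂ ≠ 0) (h₁₂ : μ₁ ≠ μ₂) :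
    cHat α s p₀ μ₁ μ₂ = chordIntercept (detRate α (1 - s) p₀) μ₁ μ₂ := by
  have : μ₂ - μ₁ ≠ 0 := sub_ne_zero.mpr h₁₂.symm
  rw [cHat, chordIntercept, detRate, detRate]
  field_simp

section DetRate

variable {α t p₀ : ℝ} (hα : 0 < α) (hα1 : α ≤ 1) (ht : 0 ≤ t) (hp : 0 ≤ p₀)
include hα hα1 ht hp

lemma monotoneOn_detRate : MonotoneOn (detRate α t p₀) (Ioi 0) := by
  intro x hx y hy hxy
  have hx' : 0 ≤ x := le_of_lt hx
  rw [detRate_eq (ne_of_gt hx), detRate_eq (ne_of_gt hy)]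
  gcongr
  · exact monotoneOn_expSlope (by linarith) (by linarith) hx' (hx'.trans hxy) hxy
  · exact monotoneOn_expSlope le_rfl zero_le_one hx' (hx'.trans hxy) hxy

lemma convexOn_detRate : ConvexOn ℝ (Ioi 0) (detRate α t p₀) := by
  refine ConvexOn.congr ?_ fun μ hμ ↦ (detRate_eq (ne_of_gt hμ)).symm
  exact (((convexOn_expSlope (by linarith) (by linarith)).smul ht).add
    ((convexOn_expSlope le_rfl zero_le_one).smul (by positivity))).subset Ioi_subset_Ici_self
      (convex_Ioi 0)

end DetRate

lemma bHat_pos {α s p₀ μ : ℝ} (hα : 0 < α) (hs0 : 0 ≤ s) (hp : 0 < p₀) (hμ : 0 < μ) :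
    0 < bHat α s p₀ μ := by
  have hdecay : exp (-α * μ) ≤ 1 := exp_le_one_iff.mpr (by nlinarith)
  have hgrowth : 1 < exp μ := one_lt_exp_iff.mpr hμ
  have hsingle : 0 ≤ s * (1 - exp (-α * μ)) * exp μ :=
    mul_nonneg (mul_nonneg hs0 (sub_nonneg.mpr hdecay)) (exp_pos μ).le
  exact div_pos (by nlinarith) hμ

section Estimates

variable {α s p₀ : ℝ} (hα : 0 < α) (hα1 : α ≤ 1)
include hα hα1

lemma bHat_le_bHat (hs0 : 0 ≤ s) (hp : 0 ≤ p₀) {μ ν : ℝ} (hμ : 0 < μ) (hμν : μ ≤ ν) :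
    bHat α s p₀ μ ≤ bHat α s p₀ ν := by
  rw [bHat_eq_detRate]
  exact monotoneOn_detRate hα hα1 hs0 hp hμ (hμ.trans_le hμν) hμν

lemma cHat_le_cHat (hs1 : s ≤ 1) (hp : 0 ≤ p₀) {μ₁ μ₂ ν₁ ν₂ : ℝ} (hμ₁ : 0 < μ₁)
    (h₁ : μ₁ ≤ ν₁) (h₂ : μ₂ ≤ ν₂) (h₁₂ : μ₁ < μ₂) (hν : ν₁ < ν₂) :
    cHat α s p₀ ν₁ ν₂ ≤ cHat α s p₀ μ₁ μ₂ := by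
  have hG := convexOn_detRate hα hα1 (sub_nonneg.mpr hs1) hp
  have hν₁ : 0 < ν₁ := hμ₁.trans_le h₁
  have hμ₁ν₂ : μ₁ < ν₂ := h₁₂.trans_le h₂
  rw [cHat_eq_chordIntercept hν₁.ne' (hν₁.trans hν).ne' hν.ne,
    cHat_eq_chordIntercept hμ₁.ne' (hμ₁.trans h₁₂).ne' h₁₂.ne]
  calc chordIntercept _ ν₁ ν₂ ≤ chordIntercept _ μ₁ ν₂ := hG.chordIntercept_anti_left hμ₁ h₁ hν
    _ ≤ chordIntercept _ μ₁ μ₂ := hG.chordIntercept_anti_right hμ₁ h₁₂ h₂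

end Estimates

noncomputable def entropyGap (e c : ℝ) : ℝ :=
  (c + e) * log 2 + e * log e + c * log c - (c + e) * log (c + e)

lemma entropyGap_comm (e c : ℝ) : entropyGap e c = entropyGap c e := by
  rw [entropyGap, entropyGap, add_comm c e]
  ring

lemma mul_one_sub_binEnt_div {e c : ℝ} (he : 0 < e) (hc : 0 < c) :
    (c + e) * (1 - binEnt (e / (c + e))) = entropyGap e c / log 2 := by
  have hce : c + e ≠ 0 := by positivity
  have hlog2 : log 2 ≠ 0 := by positivity
  rw [binEnt, show 1 - e / (c + e) = c / (c + e) by field_simp; ring, logb, logb,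
    log_div he.ne' hce, log_div hc.ne' hce, entropyGap]
  field_simp
  ring

lemma hasDerivAt_entropyGap {e c : ℝ} (hc : 0 < c) (hce : 0 < c + e) :
    HasDerivAt (entropyGap e) (log 2 + log c - log (c + e)) c := by
  have hlin : HasDerivAt (fun c : ℝ ↦ c + e) 1 c := (hasDerivAt_id c).add_const e
  have h := (((hlin.mul_const (log 2)).add_const (e * log e)).add (hasDerivAt_mul_log hc.ne')).sub
    ((hasDerivAt_mul_log hce.ne').comp c hlin)
  refine (h.congr_deriv (by ring)).congr_of_eventuallyEq (.of_forall fun x ↦ ?_)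
  simp only [entropyGap, Pi.add_apply, Pi.sub_apply, Function.comp_apply]

lemma monotoneOn_entropyGap {e : ℝ} (he : 0 < e) : MonotoneOn (entropyGap e) (Ici e) := by
  have hderiv : ∀ c ∈ Ici e, HasDerivAt (entropyGap e) (log 2 + log c - log (c + e)) c :=
    fun c hc ↦ hasDerivAt_entropyGap (he.trans_le hc) (by linarith [mem_Ici.mp hc])
  refine monotoneOn_of_hasDerivWithinAt_nonneg (convex_Ici e)
    (fun c hc ↦ (hderiv c hc).continuousAt.continuousWithinAt)
    (fun c hc ↦ (hderiv c (interior_subset hc)).hasDerivWithinAt) fun c hc ↦ ?_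
  rw [interior_Ici, mem_Ioi] at hc
  have hc0 : 0 < c := he.trans hc
  have : log (c + e) ≤ log (2 * c) := log_le_log (by linarith) (by linarith)
  rw [log_mul two_ne_zero hc0.ne'] at this
  linarith

lemma antitoneOn_entropyGap (e : ℝ) : AntitoneOn (entropyGap e) (Ioc 0 e) := by
  have hderiv : ∀ c ∈ Ioc 0 e, HasDerivAt (entropyGap e) (log 2 + log c - log (c + e)) c :=
    fun c hc ↦ hasDerivAt_entropyGap hc.1 (by linarith [hc.1, hc.2])
  refine antitoneOn_of_hasDerivWithinAt_nonpos (convex_Ioc 0 e)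
    (fun c hc ↦ (hderiv c hc).continuousAt.continuousWithinAt)
    (fun c hc ↦ (hderiv c (interior_subset hc)).hasDerivWithinAt) fun c hc ↦ ?_
  rw [interior_Ioc] at hc
  have : log (2 * c) ≤ log (c + e) := log_le_log (by linarith [hc.1]) (by linarith [hc.2])
  rw [log_mul two_ne_zero hc.1.ne'] at this
  linarith

lemma entropyGap_le_entropyGap {e e' c c' : ℝ} (he' : 0 < e') (hee : e' ≤ e) (hec : e ≤ c)
    (hcc : c ≤ c') : entropyGap e c ≤ entropyGap e' c' := by
  have he : 0 < e := he'.trans_le hee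
  calc entropyGap e c ≤ entropyGap e c' :=
        monotoneOn_entropyGap he hec (hec.trans hcc) hcc
    _ = entropyGap c' e := entropyGap_comm e c'
    _ ≤ entropyGap c' e' :=
        antitoneOn_entropyGap c' ⟨he', hee.trans (hec.trans hcc)⟩ ⟨he, hec.trans hcc⟩ hee
    _ = entropyGap e' c' := entropyGap_comm c' e'

theorem stmt0 (α s p₀ μ₁ μ₂ ν₁ ν₂ : ℝ)
    (hα : 0 < α) (hα1 : α ≤ 1) (hs0 : 0 ≤ s) (hs : s < 1 / 2) (hp : 0 < p₀)
    (hμ₁ : 0 < μ₁) (h₁ : μ₁ ≤ ν₁) (h₂ : μ₂ ≤ ν₂) (h₁₂ : μ₁ < μ₂) (hν : ν₁ < ν₂)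
    (hpos : 0 < cHat α s p₀ ν₁ ν₂ + bHat α s p₀ ν₁)
    (hratio : bHat α s p₀ ν₁ / (cHat α s p₀ ν₁ ν₂ + bHat α s p₀ ν₁) < 1 / 2) :
    (cHat α s p₀ ν₁ ν₂ + bHat α s p₀ ν₁) *
        (1 - binEnt (bHat α s p₀ ν₁ / (cHat α s p₀ ν₁ ν₂ + bHat α s p₀ ν₁)))
      ≤ (cHat α s p₀ μ₁ μ₂ + bHat α s p₀ μ₁) *
        (1 - binEnt (bHat α s p₀ μ₁ / (cHat α s p₀ μ₁ μ₂ + bHat α s p₀ μ₁))) := by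
  have he₂ : 0 < bHat α s p₀ μ₁ := bHat_pos hα hs0 hp hμ₁
  have hee : bHat α s p₀ μ₁ ≤ bHat α s p₀ ν₁ := bHat_le_bHat hα hα1 hs0 hp.le hμ₁ h₁
  have hec : bHat α s p₀ ν₁ < cHat α s p₀ ν₁ ν₂ := by
    linarith [(div_lt_iff₀ hpos).mp hratio]
  have hcc : cHat α s p₀ ν₁ ν₂ ≤ cHat α s p₀ μ₁ μ₂ :=
    cHat_le_cHat hα hα1 (by linarith) hp.le hμ₁ h₁ h₂ h₁₂ hν
  have he₁ := he₂.trans_le hee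
  rw [mul_one_sub_binEnt_div he₁ (he₁.trans hec),
    mul_one_sub_binEnt_div he₂ (he₁.trans (hec.trans_le hcc))]
  gcongr
  exact entropyGap_le_entropyGap he₂ hee hec.le hcc
end

section
/- Let 0 < μ₁ ≤ ν₁ and μ₂ ≤ ν₂ with μ₁ < μ₂ and ν₁ < ν₂. Assume â(ν₁,ν₂) > 0 and b̂(ν₁)/â(ν₁,ν₂) < 1/2. Then â(ν₁,ν₂)·(1 − h(b̂(ν₁)/â(ν₁,ν₂))) ≤ â(μ₁,μ₂)·(1 − h(b̂(μ₁)/â(μ₁,μ₂))). That is, â(μ₁,μ₂)(1 − h(b̂(μ₁)/â(μ₁,μ₂))) is monotonically decreasing in both μ₁ and μ₂ on the region where b̂(μ₁)/â(μ₁,μ₂) < 1/2. -/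
/-- Estimate `â(μ₁,μ₂)` of the detection rate of the single photon pulse. -/
noncomputable def aHat (α p₀ μ₁ μ₂ : ℝ) : ℝ :=
  (μ₂ ^ 2 * Real.exp μ₁ * ((1 - Real.exp (-α * μ₁)) + p₀ * (1 - Real.exp (-μ₁)))
    - μ₁ ^ 2 * Real.exp μ₂ * ((1 - Real.exp (-α * μ₂)) + p₀ * (1 - Real.exp (-μ₂))))
  / (μ₁ * μ₂ * (μ₂ - μ₁))

/-!
`aHat α p₀ μ₁ μ₂` is the value at `0` of the secant through `μ₁, μ₂` of the convex function
`G μ = e^μ Q_μ / μ` (`Q_μ` the gain), so it decreases when either point moves right. `bHat` is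
increasing because `(e^{aμ} - 1) / μ` is a slope of the convex function `exp (a ·)`. Finally,
`a (1 - h (b / a))` increases in `a` and decreases in `b` as long as `b / a ≤ 1/2`, since `h ≤ 1`
and `h` is increasing on `[0, 1/2]`.
-/

open Real Set

lemma binEnt_eq_binEntropy_div (x : ℝ) : binEnt x = binEntropy x / log 2 := by
  simp only [binEnt, binEntropy, logb, log_inv]
  ring

lemma binEnt_le_one (x : ℝ) : binEnt x ≤ 1 := by
  rw [binEnt_eq_binEntropy_div, div_le_one (log_pos one_lt_two)]
  exact binEntropy_le_log_two

lemma binEnt_monotoneOn : MonotoneOn binEnt (Icc 0 (1 / 2)) := by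
  intro x hx y hy hxy
  rw [binEnt_eq_binEntropy_div, binEnt_eq_binEntropy_div]
  rw [one_div] at hx hy
  gcongr
  exact binEntropy_strictMonoOn.monotoneOn hx hy hxy

lemma mul_one_sub_binEnt_div_le {a a' b b' : ℝ} (ha : 0 < a) (haa' : a ≤ a') (hb' : 0 ≤ b')
    (hb'b : b' ≤ b) (hba : b / a ≤ 1 / 2) :
    a * (1 - binEnt (b / a)) ≤ a' * (1 - binEnt (b' / a')) := by
  have ha' : 0 < a' := ha.trans_le haa'
  have hdiv : b' / a' ≤ b / a := div_le_div₀ (hb'.trans hb'b) hb'b ha haa'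
  have hent : binEnt (b' / a') ≤ binEnt (b / a) :=
    binEnt_monotoneOn ⟨by positivity, hdiv.trans hba⟩ ⟨div_nonneg (hb'.trans hb'b) ha.le, hba⟩ hdiv
  calc a * (1 - binEnt (b / a)) ≤ a' * (1 - binEnt (b / a)) :=
        mul_le_mul_of_nonneg_right haa' (sub_nonneg.2 (binEnt_le_one _))
    _ ≤ a' * (1 - binEnt (b' / a')) := by gcongr

lemma monotoneOn_exp_mul_sub_one_div {a : ℝ} :
    MonotoneOn (fun x => (exp (a * x) - 1) / x) (Ioi 0) := by
  have hconv : ConvexOn ℝ univ (fun x => exp (a * x)) :=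
    convexOn_exp.comp_linearMap (LinearMap.mul ℝ ℝ a)
  intro x hx y hy hxy
  simpa using hconv.secant_mono (a := 0) (mem_univ _) (mem_univ x) (mem_univ y) hx.ne' hy.ne' hxy

lemma exp_mul_sub_one_div_nonneg {a x : ℝ} (ha : 0 ≤ a) (hx : 0 < x) :
    0 ≤ (exp (a * x) - 1) / x :=
  div_nonneg (sub_nonneg.2 (one_le_exp (by positivity))) hx.le

lemma bHat_eq (α s p₀ x : ℝ) :
    bHat α s p₀ x = s * exp ((1 - α) * x) * ((exp (α * x) - 1) / x)
      + p₀ / 2 * ((exp (1 * x) - 1) / x) := by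
  have h : (1 - exp (-α * x)) * exp x = exp ((1 - α) * x) * (exp (α * x) - 1) := by
    simp only [sub_mul, mul_sub, one_mul, mul_one, ← exp_add]
    ring_nf
  rw [bHat, mul_assoc s, h, one_mul]
  ring

lemma bHat_nonneg {α s p₀ x : ℝ} (hα : 0 ≤ α) (hs : 0 ≤ s) (hp₀ : 0 ≤ p₀) (hx : 0 < x) :
    0 ≤ bHat α s p₀ x := by
  have := exp_mul_sub_one_div_nonneg hα hx
  have := exp_mul_sub_one_div_nonneg zero_le_one hx
  rw [bHat_eq]
  positivity

lemma bHat_monotoneOn {α s p₀ : ℝ} (hα : 0 ≤ α) (hα1 : α ≤ 1) (hs : 0 ≤ s) (hp₀ : 0 ≤ p₀) :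
    MonotoneOn (bHat α s p₀) (Ioi 0) := by
  intro x hx y hy hxy
  rw [bHat_eq, bHat_eq]
  gcongr s * exp ?_ * ?_ + p₀ / 2 * ?_
  · exact exp_mul_sub_one_div_nonneg hα hx
  · exact mul_le_mul_of_nonneg_left hxy (sub_nonneg.2 hα1)
  · exact monotoneOn_exp_mul_sub_one_div hx hy hxy
  · exact monotoneOn_exp_mul_sub_one_div hx hy hxy

/-- The value at `0` of the affine function through `(x, f x)` and `(y, f y)`. -/
noncomputable def secantIntercept (f : ℝ → ℝ) (x y : ℝ) : ℝ :=
  (y * f x - x * f y) / (y - x)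

lemma secantIntercept_eq_left (f : ℝ → ℝ) {x y : ℝ} (h : x ≠ y) :
    secantIntercept f x y = f x - x * ((f y - f x) / (y - x)) := by
  have : y - x ≠ 0 := sub_ne_zero.2 h.symm
  rw [secantIntercept]
  field_simp
  ring

lemma secantIntercept_eq_right (f : ℝ → ℝ) {x y : ℝ} (h : x ≠ y) :
    secantIntercept f x y = f y - y * ((f x - f y) / (x - y)) := by
  have : y - x ≠ 0 := sub_ne_zero.2 h.symm
  have : x - y ≠ 0 := sub_ne_zero.2 h
  rw [secantIntercept]
  field_simp
  ring

namespace ConvexOn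

variable {s : Set ℝ} {f : ℝ → ℝ}

lemma secantIntercept_anti_right (hf : ConvexOn ℝ s f) {x y y' : ℝ} (hx : x ∈ s) (hy : y ∈ s)
    (hy' : y' ∈ s) (hx₀ : 0 ≤ x) (hxy : x < y) (hyy' : y ≤ y') :
    secantIntercept f x y' ≤ secantIntercept f x y := by
  rw [secantIntercept_eq_left f hxy.ne, secantIntercept_eq_left f (hxy.trans_le hyy').ne]
  have := hf.secant_mono hx hy hy' hxy.ne' (hxy.trans_le hyy').ne' hyy'
  gcongr

lemma secantIntercept_anti_left (hf : ConvexOn ℝ s f) {x x' y : ℝ} (hx : x ∈ s) (hx' : x' ∈ s)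
    (hy : y ∈ s) (hy₀ : 0 ≤ y) (hxx' : x ≤ x') (hx'y : x' < y) :
    secantIntercept f x' y ≤ secantIntercept f x y := by
  rw [secantIntercept_eq_right f hx'y.ne, secantIntercept_eq_right f (hxx'.trans_lt hx'y).ne]
  have := hf.secant_mono hy hx hx' (hxx'.trans_lt hx'y).ne hx'y.ne hxx'
  gcongr

lemma secantIntercept_anti (hf : ConvexOn ℝ s f) {x x' y y' : ℝ} (hx : x ∈ s) (hx' : x' ∈ s)
    (hy : y ∈ s) (hy' : y' ∈ s) (hx₀ : 0 ≤ x) (hxx' : x ≤ x') (hyy' : y ≤ y') (hxy : x < y)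
    (hx'y' : x' < y') :
    secantIntercept f x' y' ≤ secantIntercept f x y :=
  (hf.secantIntercept_anti_left hx hx' hy' (hx₀.trans (hxy.le.trans hyy')) hxx' hx'y').trans
    (hf.secantIntercept_anti_right hx hy hy' hx₀ hxy hyy')

end ConvexOn

lemma convexOn_Ioi_div_self {F F' F'' : ℝ → ℝ} (hF : ∀ x, 0 < x → HasDerivAt F (F' x) x)
    (hF' : ∀ x, 0 < x → HasDerivAt F' (F'' x) x)
    (hF'' : ∀ x, 0 < x → 0 ≤ x ^ 2 * F'' x - 2 * x * F' x + 2 * F x) :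
    ConvexOn ℝ (Ioi 0) (fun x => F x / x) := by
  have hG : ∀ x, 0 < x → HasDerivAt (fun x => F x / x) ((x * F' x - F x) / x ^ 2) x :=
    fun x hx => ((hF x hx).div (hasDerivAt_id x) hx.ne').congr_deriv (by simp [mul_comm])
  have hG' : ∀ x, 0 < x → HasDerivAt (fun x => (x * F' x - F x) / x ^ 2)
      ((x ^ 2 * F'' x - 2 * x * F' x + 2 * F x) / x ^ 3) x := by
    intro x hx
    have hnum := ((hasDerivAt_id x).mul (hF' x hx)).sub (hF x hx)
    refine (hnum.div (hasDerivAt_pow 2 x) (by positivity)).congr_deriv ?_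
    simp only [Pi.sub_apply, Pi.mul_apply, id_eq]
    field_simp
    ring
  apply convexOn_of_hasDerivWithinAt2_nonneg (convex_Ioi 0)
    (f' := fun x => (x * F' x - F x) / x ^ 2)
    (f'' := fun x => (x ^ 2 * F'' x - 2 * x * F' x + 2 * F x) / x ^ 3)
  · exact fun x hx => (hG x hx).continuousAt.continuousWithinAt
  · rw [interior_Ioi]
    exact fun x hx => (hG x hx).hasDerivWithinAt
  · rw [interior_Ioi]
    exact fun x hx => (hG' x hx).hasDerivWithinAt
  · rw [interior_Ioi]
    exact fun x hx => div_nonneg (hF'' x hx) (pow_nonneg hx.le 3)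

lemma monotone_exp_mul_sq_sub_two_mul_add_two :
    Monotone fun y : ℝ => exp y * (y ^ 2 - 2 * y + 2) := by
  refine monotone_of_hasDerivAt_nonneg (f' := fun y => y ^ 2 * exp y) (fun y => ?_)
    (fun y => by positivity)
  have hq : HasDerivAt (fun y : ℝ => y ^ 2 - 2 * y + 2) (2 * y - 2) y := by
    simpa using ((hasDerivAt_pow 2 y).sub ((hasDerivAt_id y).const_mul 2)).add_const 2
  exact ((hasDerivAt_exp y).mul hq).congr_deriv (by ring)

lemma convexOn_Ioi_exp_gain_div {c p₀ : ℝ} (hc₁ : c ≤ 1) (hp₀ : 0 ≤ p₀) :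
    ConvexOn ℝ (Ioi 0) (fun x => ((1 + p₀) * exp x - exp (c * x) - p₀) / x) := by
  have hexp : ∀ x, HasDerivAt (fun x => exp (c * x)) (c * exp (c * x)) x := fun x =>
    ((hasDerivAt_const_mul c).exp).congr_deriv (mul_comm _ _)
  refine convexOn_Ioi_div_self (F' := fun x => (1 + p₀) * exp x - c * exp (c * x))
    (F'' := fun x => (1 + p₀) * exp x - c * (c * exp (c * x)))
    (fun x _ => (((hasDerivAt_exp x).const_mul _).sub (hexp x)).sub_const _)
    (fun x _ => ((hasDerivAt_exp x).const_mul _).sub ((hexp x).const_mul c)) fun x hx => ?_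
  set ψ : ℝ → ℝ := fun y => exp y * (y ^ 2 - 2 * y + 2)
  have hψ₀ : ψ 0 ≤ ψ x := monotone_exp_mul_sq_sub_two_mul_add_two hx.le
  have hψc : ψ (c * x) ≤ ψ x :=
    monotone_exp_mul_sq_sub_two_mul_add_two (mul_le_of_le_one_left hx.le hc₁)
  -- `x³` times the second derivative is `p₀ (ψ x - ψ 0) + (ψ x - ψ (c x))`
  have key : x ^ 2 * ((1 + p₀) * exp x - c * (c * exp (c * x)))
      - 2 * x * ((1 + p₀) * exp x - c * exp (c * x)) + 2 * ((1 + p₀) * exp x - exp (c * x) - p₀)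
      = p₀ * (ψ x - ψ 0) + (ψ x - ψ (c * x)) := by
    simp only [ψ, exp_zero]
    ring
  rw [key]
  have := mul_nonneg hp₀ (sub_nonneg.2 hψ₀)
  linarith

lemma aHat_eq_secantIntercept (α p₀ : ℝ) {μ₁ μ₂ : ℝ} (h₁ : μ₁ ≠ 0) (h₂ : μ₂ ≠ 0) :
    aHat α p₀ μ₁ μ₂ = secantIntercept
      (fun x => ((1 + p₀) * exp x - exp ((1 - α) * x) - p₀) / x) μ₁ μ₂ := by
  rcases eq_or_ne μ₁ μ₂ with rfl | h₁₂
  · simp [aHat, secantIntercept]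
  have hgain : ∀ μ, exp μ * ((1 - exp (-α * μ)) + p₀ * (1 - exp (-μ)))
      = (1 + p₀) * exp μ - exp ((1 - α) * μ) - p₀ := by
    intro μ
    have hα : exp μ * exp (-α * μ) = exp ((1 - α) * μ) := by rw [← exp_add]; ring_nf
    have h₀ : exp μ * exp (-μ) = 1 := by rw [← exp_add, add_neg_cancel, exp_zero]
    linear_combination -hα - p₀ * h₀
  have : μ₂ - μ₁ ≠ 0 := sub_ne_zero.2 h₁₂.symm
  rw [aHat, secantIntercept, mul_assoc (μ₂ ^ 2), hgain, mul_assoc (μ₁ ^ 2), hgain]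
  field_simp

lemma aHat_anti {α p₀ μ₁ μ₂ ν₁ ν₂ : ℝ} (hα : 0 ≤ α) (hp₀ : 0 ≤ p₀)
    (hμ₁ : 0 < μ₁) (h₁ : μ₁ ≤ ν₁) (h₂ : μ₂ ≤ ν₂) (hμ : μ₁ < μ₂) (hν : ν₁ < ν₂) :
    aHat α p₀ ν₁ ν₂ ≤ aHat α p₀ μ₁ μ₂ := by
  have hν₁ : 0 < ν₁ := hμ₁.trans_le h₁
  rw [aHat_eq_secantIntercept α p₀ hμ₁.ne' (hμ₁.trans hμ).ne',
    aHat_eq_secantIntercept α p₀ hν₁.ne' (hν₁.trans hν).ne']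
  exact (convexOn_Ioi_exp_gain_div (by linarith) hp₀).secantIntercept_anti hμ₁ hν₁
    (hμ₁.trans hμ) (hν₁.trans hν) hμ₁.le h₁ h₂ hμ hν

theorem stmt1_general (α s p₀ μ₁ μ₂ ν₁ ν₂ : ℝ)
    (hα : 0 < α) (hα1 : α ≤ 1) (hs0 : 0 ≤ s) (hp : 0 < p₀)
    (hμ₁ : 0 < μ₁) (h₁ : μ₁ ≤ ν₁) (h₂ : μ₂ ≤ ν₂) (h₁₂ : μ₁ < μ₂) (hν : ν₁ < ν₂)
    (hpos : 0 < aHat α p₀ ν₁ ν₂)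
    (hratio : bHat α s p₀ ν₁ / aHat α p₀ ν₁ ν₂ < 1 / 2) :
    aHat α p₀ ν₁ ν₂ * (1 - binEnt (bHat α s p₀ ν₁ / aHat α p₀ ν₁ ν₂))
      ≤ aHat α p₀ μ₁ μ₂ * (1 - binEnt (bHat α s p₀ μ₁ / aHat α p₀ μ₁ μ₂)) :=
  mul_one_sub_binEnt_div_le hpos (aHat_anti hα.le hp.le hμ₁ h₁ h₂ h₁₂ hν)
    (bHat_nonneg hα.le hs0 hp.le hμ₁)
    (bHat_monotoneOn hα.le hα1 hs0 hp.le hμ₁ (hμ₁.trans_le h₁) h₁) hratio.le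

theorem stmt1 (α s p₀ μ₁ μ₂ ν₁ ν₂ : ℝ)
    (hα : 0 < α) (hα1 : α ≤ 1) (hs0 : 0 ≤ s) (hs : s < 1 / 2) (hp : 0 < p₀)
    (hμ₁ : 0 < μ₁) (h₁ : μ₁ ≤ ν₁) (h₂ : μ₂ ≤ ν₂) (h₁₂ : μ₁ < μ₂) (hν : ν₁ < ν₂)
    (hpos : 0 < aHat α p₀ ν₁ ν₂)
    (hratio : bHat α s p₀ ν₁ / aHat α p₀ ν₁ ν₂ < 1 / 2) :
    aHat α p₀ ν₁ ν₂ * (1 - binEnt (bHat α s p₀ ν₁ / aHat α p₀ ν₁ ν₂))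
      ≤ aHat α p₀ μ₁ μ₂ * (1 - binEnt (bHat α s p₀ μ₁ / aHat α p₀ μ₁ μ₂)) :=
  stmt1_general α s p₀ μ₁ μ₂ ν₁ ν₂ hα hα1 hs0 hp hμ₁ h₁ h₂ h₁₂ hν hpos hratio
end

section
/- The function F_a is monotonically decreasing on (0, μ_s), and the supremum of F_a over μ_d ∈ (0, μ_s) equals the limit of F_a(μ_d) as μ_d → 0⁺, which equals α/(1+ε) + p₀. -/
/-- The function `F_a(μ_d)` appearing in Lemma 4 of the paper:
`f_a` evaluated at the worst-case true intensities, with `α̃ = α/(1+ε)`. -/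
noncomputable def Fa (α p₀ ε μts μs μd : ℝ) : ℝ :=
  (μs ^ 2 * Real.exp μd * ((1 - Real.exp (-(α / (1 + ε)) * μd)) + p₀ * (1 - Real.exp (-μd)))
    - μd ^ 2 * Real.exp μs * ((1 - Real.exp (-α * μts)) + p₀ * (1 - Real.exp (-μs))))
  / (μd * μs * (μs - μd))

/-!
Write `α̃ = α/(1+ε)` and `G t = eᵗ((1 - e^{-α̃t}) + p₀(1 - e^{-t})) = (1+p₀)eᵗ - e^{(1-α̃)t} - p₀`.
Since `G 0 = 0` and the third derivative of `G` is nonnegative on `[0, ∞)`, the function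
`φ t = G t / t` is convex on `(0, ∞)`, and `φ t → G' 0 = α̃ + p₀` as `t → 0⁺`. Clearing
denominators, `F_a(t)` is the value at `0` of the chord from `(t, φ t)` to `(μ_s, ψ)`, where
`ψ = e^{μ_s}((1 - e^{-αμ̃_s}) + p₀(1 - e^{-μ_s}))/μ_s` lies above `φ μ_s` because `αμ̃_s ≥ α̃μ_s`.
By convexity this intercept decreases as `t` grows, and it tends to `α̃ + p₀`; an antitone
function on `(0, μ_s)` has its supremum at `0⁺`.
-/

open Real Set Filter Topology

lemma convexOn_Ioi_div_of_thirdDeriv_nonneg {G G₁ G₂ G₃ : ℝ → ℝ}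
    (hG : ∀ x, HasDerivAt G (G₁ x) x) (hG₁ : ∀ x, HasDerivAt G₁ (G₂ x) x)
    (hG₂ : ∀ x, HasDerivAt G₂ (G₃ x) x) (hG₃ : ∀ x, 0 < x → 0 ≤ G₃ x) (hG0 : G 0 = 0) :
    ConvexOn ℝ (Ioi 0) (fun t => G t / t) := by
  -- `t³ (G t / t)'' = H t`, and `H` vanishes at `0` with derivative `t² G₃ t`.
  set H : ℝ → ℝ := fun t => t ^ 2 * G₂ t - 2 * t * G₁ t + 2 * G t
  have hH : ∀ x, HasDerivAt H (x ^ 2 * G₃ x) x := fun x => by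
    have := (((hasDerivAt_pow 2 x).mul (hG₂ x)).sub
      (((hasDerivAt_id x).const_mul 2).mul (hG₁ x))).add ((hG x).const_mul 2)
    exact this.congr_deriv (by simp only [id_eq]; push_cast; ring)
  have hH_mono : MonotoneOn H (Ici 0) := by
    refine monotoneOn_of_hasDerivWithinAt_nonneg (convex_Ici 0)
      (fun x _ => (hH x).continuousAt.continuousWithinAt)
      (fun x _ => (hH x).hasDerivWithinAt) fun x hx => ?_
    rw [interior_Ici] at hx
    exact mul_nonneg (sq_nonneg x) (hG₃ x hx)
  have hH_nonneg : ∀ x, 0 ≤ x → 0 ≤ H x := fun x hx => by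
    simpa [H, hG0] using hH_mono self_mem_Ici (mem_Ici.2 hx) hx
  have hpos : ∀ x ∈ interior (Ioi (0 : ℝ)), 0 < x := fun x hx => by rwa [interior_Ioi] at hx
  refine convexOn_of_hasDerivWithinAt2_nonneg (convex_Ioi 0)
    (f' := fun t => (G₁ t * t - G t) / t ^ 2) (f'' := fun t => H t / t ^ 3)
    (fun x hx => ((hG x).continuousAt.div continuousAt_id (ne_of_gt hx)).continuousWithinAt)
    (fun x hx => ?_) (fun x hx => ?_) fun x hx => ?_
  · exact (((hG x).div (hasDerivAt_id x) (hpos x hx).ne').congr_deriv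
      (by simp)).hasDerivWithinAt
  · have hx0 := (hpos x hx).ne'
    have := (((hG₁ x).mul (hasDerivAt_id x)).sub (hG x)).div (hasDerivAt_pow 2 x)
      (pow_ne_zero 2 hx0)
    refine (this.congr_deriv ?_).hasDerivWithinAt
    simp only [id_eq, H, Pi.sub_apply, Pi.mul_apply]
    field_simp
    ring
  · have hx0 := hpos x hx
    exact div_nonneg (hH_nonneg x hx0.le) (by positivity)

lemma antitoneOn_chord_intercept {φ : ℝ → ℝ} {s : Set ℝ} {m ψ : ℝ} (hφ : ConvexOn ℝ s φ)
    (hm : m ∈ s) (hm0 : 0 ≤ m) (hψ : φ m ≤ ψ) :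
    AntitoneOn (fun t => (m * φ t - t * ψ) / (m - t)) (s ∩ Iio m) := by
  have hdecomp : ∀ t < m, (m * φ t - t * ψ) / (m - t)
      = ψ - m * ((ψ - φ m) / (m - t) + (φ t - φ m) / (t - m)) := fun t ht => by
    have h₁ : m - t ≠ 0 := (sub_pos.2 ht).ne'
    have h₂ : t - m ≠ 0 := (sub_neg.2 ht).ne
    field_simp
    ring
  intro x ⟨hxs, hxm⟩ y ⟨hys, hym⟩ hxy
  simp only [hdecomp x hxm, hdecomp y hym]
  have hgap : (ψ - φ m) / (m - x) ≤ (ψ - φ m) / (m - y) :=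
    div_le_div_of_nonneg_left (sub_nonneg.2 hψ) (sub_pos.2 hym) (by linarith)
  have hsecant := hφ.secant_mono hm hxs hys hxm.ne hym.ne hxy
  exact sub_le_sub_left (mul_le_mul_of_nonneg_left (add_le_add hgap hsecant) hm0) ψ

lemma tendsto_chord_intercept {φ : ℝ → ℝ} {s : Set ℝ} {m ψ d : ℝ}
    (hφ : Tendsto φ (𝓝[s] 0) (𝓝 d)) (hm : m ≠ 0) :
    Tendsto (fun t => (m * φ t - t * ψ) / (m - t)) (𝓝[s] 0) (𝓝 d) := by
  have ht : Tendsto (fun t : ℝ => t) (𝓝[s] 0) (𝓝 0) :=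
    tendsto_nhdsWithin_of_tendsto_nhds tendsto_id
  rw [show d = (m * d - 0 * ψ) / (m - 0) by field_simp; ring]
  exact ((tendsto_const_nhds.mul hφ).sub (ht.mul tendsto_const_nhds)).div
    (tendsto_const_nhds.sub ht) (by simpa using hm)

noncomputable def expGain (a p t : ℝ) : ℝ := exp t * ((1 - exp (-a * t)) + p * (1 - exp (-t)))

lemma expGain_eq (a p t : ℝ) : expGain a p t = (1 + p) * exp t - exp ((1 - a) * t) - p := by
  rw [expGain, show (1 - a) * t = t + -a * t by ring, exp_add, exp_neg]
  field_simp
  ring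

lemma hasDerivAt_const_mul_exp_sub_pow_mul_exp (b c : ℝ) (k : ℕ) (x : ℝ) :
    HasDerivAt (fun t => c * exp t - b ^ k * exp (b * t))
      (c * exp x - b ^ (k + 1) * exp (b * x)) x := by
  have := ((hasDerivAt_exp x).const_mul c).sub
    ((((hasDerivAt_id x).const_mul b).exp).const_mul (b ^ k))
  exact this.congr_deriv (by simp only [id_eq]; ring)

lemma hasDerivAt_expGain (a p x : ℝ) :
    HasDerivAt (expGain a p) ((1 + p) * exp x - (1 - a) * exp ((1 - a) * x)) x := by
  have := (hasDerivAt_const_mul_exp_sub_pow_mul_exp (1 - a) (1 + p) 0 x).sub_const p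
  simp only [pow_zero, one_mul, zero_add, pow_one] at this
  exact this.congr_of_eventuallyEq (Eventually.of_forall (expGain_eq a p))

lemma convexOn_expGain_div (a p : ℝ) (ha : 0 ≤ a) (hp : 0 ≤ p) :
    ConvexOn ℝ (Ioi 0) (fun t => expGain a p t / t) := by
  refine convexOn_Ioi_div_of_thirdDeriv_nonneg
    (fun x => (hasDerivAt_expGain a p x).congr_deriv (by ring))
    (hasDerivAt_const_mul_exp_sub_pow_mul_exp (1 - a) (1 + p) 1)
    (hasDerivAt_const_mul_exp_sub_pow_mul_exp (1 - a) (1 + p) 2)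
    (fun x hx => ?_) (by simp [expGain])
  rw [sub_nonneg, show 2 + 1 = 3 by rfl]
  rcases le_or_gt (1 - a) 0 with hb | hb
  · have : (1 - a) ^ 3 ≤ 0 := Odd.pow_nonpos (by decide) hb
    nlinarith [exp_pos x, exp_pos ((1 - a) * x)]
  · calc (1 - a) ^ 3 * exp ((1 - a) * x) ≤ 1 * exp x := by
          gcongr
          · exact pow_le_one₀ hb.le (by linarith)
          · nlinarith
      _ ≤ (1 + p) * exp x := by gcongr; linarith

lemma tendsto_expGain_div (a p : ℝ) :
    Tendsto (fun t => expGain a p t / t) (𝓝[≠] 0) (𝓝 (a + p)) := by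
  have hd : HasDerivAt (expGain a p) (a + p) 0 :=
    (hasDerivAt_expGain a p 0).congr_deriv (by simp only [exp_zero, mul_zero]; ring)
  simpa [slope_fun_def_field, expGain] using hd.tendsto_slope

lemma expGain_le_of_mul_le {a b p x y : ℝ} (h : a * x ≤ b * y) :
    expGain a p x ≤ exp x * ((1 - exp (-b * y)) + p * (1 - exp (-x))) := by
  rw [expGain]
  gcongr exp x * (1 - exp ?_ + _)
  linarith

lemma Fa_eq_chord_intercept (α p₀ ε μts : ℝ) {μs t : ℝ} (ht : t ≠ 0) (hμs : μs ≠ 0)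
    (htμs : t ≠ μs) :
    Fa α p₀ ε μts μs t = (μs * (expGain (α / (1 + ε)) p₀ t / t)
      - t * (exp μs * ((1 - exp (-α * μts)) + p₀ * (1 - exp (-μs))) / μs)) / (μs - t) := by
  have : μs - t ≠ 0 := sub_ne_zero.2 htμs.symm
  rw [Fa, expGain]
  field_simp

theorem stmt17_general (α p₀ ε μts μs : ℝ)
    (hα : 0 < α) (hp : 0 < p₀) (hε : 0 < ε) (hμs : 0 < μs) (hμs' : μs ≤ (1 + ε) * μts) :
    AntitoneOn (fun μd => Fa α p₀ ε μts μs μd) (Set.Ioo 0 μs) ∧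
    sSup ((fun μd => Fa α p₀ ε μts μs μd) '' Set.Ioo 0 μs) = α / (1 + ε) + p₀ ∧
    Filter.Tendsto (fun μd => Fa α p₀ ε μts μs μd)
      (nhdsWithin 0 (Set.Ioo 0 μs)) (nhds (α / (1 + ε) + p₀)) := by
  set a := α / (1 + ε)
  set K := exp μs * ((1 - exp (-α * μts)) + p₀ * (1 - exp (-μs)))
  have hK : expGain a p₀ μs / μs ≤ K / μs := by
    refine div_le_div_of_nonneg_right (expGain_le_of_mul_le ?_) hμs.le
    rw [div_mul_eq_mul_div, div_le_iff₀ (by linarith)]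
    nlinarith
  have hFa : EqOn (fun t => Fa α p₀ ε μts μs t)
      (fun t => (μs * (expGain a p₀ t / t) - t * (K / μs)) / (μs - t)) (Ioo 0 μs) :=
    fun t ht => Fa_eq_chord_intercept α p₀ ε μts ht.1.ne' hμs.ne' ht.2.ne
  have hanti : AntitoneOn (fun t => Fa α p₀ ε μts μs t) (Ioo 0 μs) :=
    ((antitoneOn_chord_intercept (convexOn_expGain_div a p₀ (by positivity) hp.le)
      (mem_Ioi.2 hμs) hμs.le hK).mono fun t ht => ⟨ht.1, ht.2⟩).congr hFa.symm
  have hlim : Tendsto (fun t => Fa α p₀ ε μts μs t) (𝓝[Ioo 0 μs] 0) (𝓝 (a + p₀)) :=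
    (tendsto_chord_intercept ((tendsto_expGain_div a p₀).mono_left
      (nhdsWithin_mono 0 fun t ht => ht.1.ne')) hμs.ne').congr'
      (eventuallyEq_nhdsWithin_of_eqOn hFa).symm
  refine ⟨hanti, ?_, hlim⟩
  exact (IsGLB.isLUB_of_tendsto hanti (isGLB_Ioo hμs) (nonempty_Ioo.2 hμs) hlim).csSup_eq
    ((nonempty_Ioo.2 hμs).image _)

theorem stmt17 (α s p₀ ε μts μs : ℝ)
    (hα : 0 < α) (hα1 : α ≤ 1) (hs0 : 0 ≤ s) (hs : s < 1 / 2) (hp : 0 < p₀)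
    (hε : 0 < ε) (hμts : 0 < μts) (hμs : 0 < μs) (hμs' : μs ≤ (1 + ε) * μts) :
    AntitoneOn (fun μd => Fa α p₀ ε μts μs μd) (Set.Ioo 0 μs) ∧
    sSup ((fun μd => Fa α p₀ ε μts μs μd) '' Set.Ioo 0 μs) = α / (1 + ε) + p₀ ∧
    Filter.Tendsto (fun μd => Fa α p₀ ε μts μs μd)
      (nhdsWithin 0 (Set.Ioo 0 μs)) (nhds (α / (1 + ε) + p₀)) :=
  stmt17_general α p₀ ε μts μs hα hp hε hμs hμs'
end
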